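/- arXiv:1410.2482 — 3 statements merged into one kernel-verified Lean document; each statement's English description precedes it below -/
import Mathlib

section
/- Let [w], [v] ∈ X be two points of the Plücker quadric all of whose six homogeneous coordinates are nonzero (points of the main stratum). Then [w] and [v] lie in the same orbit of the (ℂ*)⁴-action if and only if w₁·w₄·v₂·v₃ = v₁·v₄·w₂·w₃, i.e. if and only if the invariants w₁w₄/(w₂w₃) and v₁v₄/(v₂v₃) coincide. Thus the orbits of the main stratum are in bijection with the values of this invariant. -/
/-!
The ratios `v k / w k` of two points of the main stratum in the same orbit are, up to a
common scalar, the weights `torusCoef t`, which satisfy `c₀c₅ = c₁c₄ = c₂c₃`; conversely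
every nonzero `r` with `r₀r₅ = r₁r₄ = r₂r₃` is such a weight vector, since `t` can be solved
for after extracting one square root. On the Plücker quadric the relation `r₀r₅ = r₂r₃`
follows from `r₁r₄ = r₂r₃`, so the single cross-ratio condition decides the orbit.
-/

/-- The weights of the `(ℂ*)⁴`-action on `ℂP⁵` coming from the second symmetric power:
`t` acts on homogeneous coordinates by multiplication by
`(t₁t₂, t₁t₃, t₁t₄, t₂t₃, t₂t₄, t₃t₄)`. -/
def torusCoef (t : Fin 4 → ℂ) : Fin 6 → ℂ :=
  ![t 0 * t 1, t 0 * t 2, t 0 * t 3, t 1 * t 2, t 1 * t 3, t 2 * t 3]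

lemma torusCoef_one_mul_torusCoef_four (t : Fin 4 → ℂ) :
    torusCoef t 1 * torusCoef t 4 = torusCoef t 2 * torusCoef t 3 := by
  simp only [torusCoef, Matrix.cons_val]
  ring

lemma exists_torusCoef_eq {r : Fin 6 → ℂ} (hr : ∀ k, r k ≠ 0)
    (h05 : r 0 * r 5 = r 2 * r 3) (h14 : r 1 * r 4 = r 2 * r 3) :
    ∃ t : Fin 4 → ℂ, (∀ i, t i ≠ 0) ∧ torusCoef t = r := by
  obtain ⟨s, hs⟩ := IsAlgClosed.exists_eq_mul_self (r 0 * r 1 / r 3)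
  have hs0 : s ≠ 0 := by
    rintro rfl
    simp [hr] at hs
  have hss : s * s * r 3 = r 0 * r 1 := by
    rw [← hs, div_mul_cancel₀ _ (hr 3)]
  refine ⟨![s, r 0 / s, r 1 / s, r 2 / s], ?_, ?_⟩
  · intro i
    fin_cases i <;> simp [hs0, hr]
  · funext k
    fin_cases k <;> simp only [torusCoef, Fin.reduceFinMk, Matrix.cons_val] <;> field_simp
    · linear_combination -hss
    · refine mul_left_cancel₀ (hr 1) ?_
      linear_combination -r 2 * hss - s ^ 2 * h14
    · refine mul_left_cancel₀ (hr 0) ?_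
      linear_combination -r 2 * hss - s ^ 2 * h05

lemma plucker_mul_eq_of_cross_ratio_eq {w v : Fin 6 → ℂ}
    (hwq : w 0 * w 5 + w 2 * w 3 = w 1 * w 4)
    (hvq : v 0 * v 5 + v 2 * v 3 = v 1 * v 4)
    (hcr : w 1 * w 4 * (v 2 * v 3) = v 1 * v 4 * (w 2 * w 3)) :
    w 0 * w 5 * (v 2 * v 3) = v 0 * v 5 * (w 2 * w 3) := by
  linear_combination (v 2 * v 3) * hwq - (w 2 * w 3) * hvq + hcr

/-- two points `[w], [v]` of the Plücker quadric with all six homogeneous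
coordinates nonzero (points of the main stratum) lie in the same `(ℂ*)⁴`-orbit if and only
if `w₁w₄·v₂v₃ = v₁v₄·w₂w₃`, i.e. iff the invariants `w₁w₄/(w₂w₃)` and `v₁v₄/(v₂v₃)`
coincide. (Same orbit in `ℂP⁵` means: some `t ∈ (ℂ*)⁴` carries a representative of `[w]`
to a representative of `[v]`, i.e. `v` is a nonzero scalar multiple of `t·w`.) -/
theorem main_stratum_orbits_classified_by_cross_ratio (w v : Fin 6 → ℂ)
    (hwq : w 0 * w 5 + w 2 * w 3 = w 1 * w 4)
    (hvq : v 0 * v 5 + v 2 * v 3 = v 1 * v 4)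
    (hw : ∀ k, w k ≠ 0) (hv : ∀ k, v k ≠ 0) :
    (∃ t : Fin 4 → ℂ, (∀ i, t i ≠ 0) ∧
        ∃ lam : ℂ, lam ≠ 0 ∧ ∀ k : Fin 6, v k = lam * (torusCoef t k * w k)) ↔
    w 1 * w 4 * (v 2 * v 3) = v 1 * v 4 * (w 2 * w 3) := by
  constructor
  · rintro ⟨t, -, lam, -, hvw⟩
    rw [hvw 1, hvw 2, hvw 3, hvw 4]
    linear_combination (-lam ^ 2 * (w 1 * w 2 * w 3 * w 4)) * torusCoef_one_mul_torusCoef_four t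
  · intro hcr
    have h05 := plucker_mul_eq_of_cross_ratio_eq hwq hvq hcr
    obtain ⟨t, ht, htr⟩ := exists_torusCoef_eq (r := fun k ↦ v k / w k)
      (fun k ↦ div_ne_zero (hv k) (hw k)) (by
        rw [div_mul_div_comm, div_mul_div_comm, div_eq_div_iff (by simp [hw]) (by simp [hw])]
        linear_combination -h05)
      (by
        rw [div_mul_div_comm, div_mul_div_comm, div_eq_div_iff (by simp [hw]) (by simp [hw])]
        linear_combination -hcr)
    refine ⟨t, ht, 1, one_ne_zero, fun k ↦ ?_⟩
    rw [htr, one_mul, div_mul_cancel₀ _ (hw k)]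
end

section
/- The orbit space X/T⁴ of the canonical T⁴-action on the Grassmannian G₄,₂ (realized as the Plücker quadric X) is homotopy equivalent to the 5-sphere S⁵ (the unit sphere of ℝ⁶): there exist continuous maps f : X/T⁴ → S⁵ and g : S⁵ → X/T⁴ with g∘f and f∘g homotopic to the respective identities. -/
/-- Proportionality of nonzero vectors of `ℂ⁶`: the relation defining `ℂP⁵`. -/
def projRel (x y : {w : Fin 6 → ℂ // w ≠ 0}) : Prop :=
  ∃ c : ℂ, c ≠ 0 ∧ (fun k => c * x.1 k) = y.1

/-- `ℂP⁵`, with the quotient topology. -/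
abbrev CP5 := Quot projRel

/-- The Plücker quadric `X = {[w] ∈ ℂP⁵ : w₀w₅ + w₂w₃ = w₁w₄}`, i.e. the Grassmannian
`G₄,₂` under the Plücker embedding, with the subspace topology. -/
def pluckerQuadric : Set CP5 :=
  {p | ∃ w : {w : Fin 6 → ℂ // w ≠ 0}, Quot.mk projRel w = p ∧
        w.1 0 * w.1 5 + w.1 2 * w.1 3 = w.1 1 * w.1 4}

/-- Two points of `X` lie in the same orbit of the compact torus
`T⁴ = {t ∈ ℂ⁴ : |tᵢ| = 1}`. -/
def orbitRel (p q : ↥pluckerQuadric) : Prop :=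
  ∃ t : Fin 4 → ℂ, (∀ i, ‖t i‖ = 1) ∧
    ∃ w w' : {w : Fin 6 → ℂ // w ≠ 0},
      Quot.mk projRel w = p.1 ∧ Quot.mk projRel w' = q.1 ∧
      ∀ k : Fin 6, w'.1 k = torusCoef t k * w.1 k

/-!
Send a point `[w]` of `X`, normalised so that `‖w‖ = 1`, to `orbitCoords w ∈ ℝ⁶`: the three
moment-map coordinates `|w₀|² - |w₅|², |w₂|² - |w₃|², |w₁|² - |w₄|²` together with the Hopf
image of the pair `(w₀w₅, w₂w₃)`, which the torus only rotates by the common phase `t₀t₁t₂t₃`.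
On the quadric this map is onto `ℝ⁶`, its fibres are exactly the `T⁴`-orbits, and
`‖w‖² = coordNormSq (orbitCoords w)`; so `X/T⁴` is identified with the level set
`{coordNormSq = 1}`. That function vanishes at `0` and is strictly increasing and unbounded along
every ray, so radial projection maps the level set bijectively onto `S⁵`. A continuous bijection
from the compact space `X/T⁴` to the Hausdorff `S⁵` is a homeomorphism.
-/

open Set Filter Complex ComplexConjugate

lemma eq_and_eq_of_sub_eq_of_mul_eq {α : Type*} [CommRing α] [LinearOrder α]
    [IsStrictOrderedRing α] {x y x' y' : α} (hx : 0 ≤ x) (hy : 0 ≤ y) (hx' : 0 ≤ x')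
    (hy' : 0 ≤ y') (hsub : x - y = x' - y') (hmul : x * y = x' * y') : x = x' ∧ y = y' := by
  have hadd : x + y = x' + y' := by
    rw [← sq_eq_sq₀ (by positivity) (by positivity)]
    linear_combination (x - y + x' - y') * hsub + 4 * hmul
  constructor <;> linarith

namespace Complex

lemma mul_conj_eq_one_of_norm_eq_one {z : ℂ} (hz : ‖z‖ = 1) : z * conj z = 1 := by
  rw [mul_conj', hz, ofReal_one, one_pow]

lemma exists_sq_eq_of_norm_eq_one {u : ℂ} (hu : ‖u‖ = 1) : ∃ s : ℂ, ‖s‖ = 1 ∧ s ^ 2 = u := by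
  obtain ⟨s, hs⟩ := IsAlgClosed.exists_pow_nat_eq u two_pos
  refine ⟨s, ?_, hs⟩
  rw [← pow_eq_one_iff_of_nonneg (norm_nonneg s) two_ne_zero, ← norm_pow, hs, hu]

lemma exists_norm_eq_one_of_normSq_sub_eq_of_mul_eq {u v u' v' : ℂ}
    (hsub : normSq u - normSq v = normSq u' - normSq v') (hmul : u * v = u' * v') :
    ∃ τ : ℂ, ‖τ‖ = 1 ∧ u' = τ * u ∧ v' = conj τ * v := by
  obtain ⟨hu, hv⟩ := eq_and_eq_of_sub_eq_of_mul_eq (normSq_nonneg u) (normSq_nonneg v)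
    (normSq_nonneg u') (normSq_nonneg v') hsub (by rw [← normSq_mul, ← normSq_mul, hmul])
  have hnu : ‖u‖ = ‖u'‖ := by rw [norm_def, norm_def, hu]
  have hnv : ‖v‖ = ‖v'‖ := by rw [norm_def, norm_def, hv]
  by_cases hu0 : u = 0
  · have hu0' : u' = 0 := by rwa [hu0, map_zero, eq_comm, normSq_eq_zero] at hu
    by_cases hv0 : v = 0
    · have hv0' : v' = 0 := by rwa [hv0, map_zero, eq_comm, normSq_eq_zero] at hv
      exact ⟨1, by simp, by simp [hu0, hu0'], by simp [hv0, hv0']⟩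
    · refine ⟨conj (v' / v), ?_, by simp [hu0, hu0'], ?_⟩
      · rw [RCLike.norm_conj, norm_div, ← hnv, div_self (norm_ne_zero_iff.mpr hv0)]
      · rw [conj_conj, div_mul_cancel₀ _ hv0]
  · have hτ : ‖u' / u‖ = 1 := by rw [norm_div, ← hnu, div_self (norm_ne_zero_iff.mpr hu0)]
    refine ⟨u' / u, hτ, (div_mul_cancel₀ _ hu0).symm, ?_⟩
    have hv : v = u' / u * v' := mul_left_cancel₀ hu0 (by rw [hmul]; field_simp)
    rw [hv, ← mul_assoc, mul_comm _ (u' / u), mul_conj_eq_one_of_norm_eq_one hτ, one_mul]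

lemma exists_normSq_sub_eq_mul_eq (a : ℝ) (D : ℂ) :
    ∃ u v : ℂ, normSq u - normSq v = a ∧ u * v = D := by
  set r := √(a ^ 2 + 4 * normSq D)
  have hr : r ^ 2 = a ^ 2 + 4 * normSq D :=
    Real.sq_sqrt (add_nonneg (sq_nonneg a) (by linarith [normSq_nonneg D]))
  have har : |a| ≤ r := Real.abs_le_sqrt (by linarith [normSq_nonneg D])
  have hm : 0 ≤ (r + a) / 2 := by linarith [neg_abs_le a]
  have hn : 0 ≤ (r - a) / 2 := by linarith [le_abs_self a]
  refine ⟨√((r + a) / 2) * exp (arg D * I), √((r - a) / 2), ?_, ?_⟩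
  · rw [normSq_mul, normSq_ofReal, normSq_ofReal, Real.mul_self_sqrt hm,
      Real.mul_self_sqrt hn, normSq_eq_norm_sq, norm_exp_ofReal_mul_I]
    ring
  · have hmn : √((r + a) / 2) * √((r - a) / 2) = ‖D‖ := by
      rw [← Real.sqrt_mul hm, norm_def]
      congr 1
      linear_combination hr / 4
    rw [mul_right_comm, ← ofReal_mul, hmn, norm_mul_exp_arg_mul_I]

end Complex

section Radial

variable {E : Type*} {g : E → ℝ}

lemma eq_of_inv_norm_smul_eq [NormedAddCommGroup E] [NormedSpace ℝ E]
    (hg : ∀ x ≠ 0, StrictMonoOn (fun s : ℝ => g (s • x)) (Ici 0)) {x y : E} (hx : x ≠ 0)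
    (hy : y ≠ 0) (hgxy : g x = g y) (h : ‖x‖⁻¹ • x = ‖y‖⁻¹ • y) :
    x = y := by
  have hyx : y = (‖y‖ / ‖x‖) • x := by
    rw [div_eq_mul_inv, mul_smul, h, smul_inv_smul₀ (norm_ne_zero_iff.mpr hy)]
  have hs : ‖y‖ / ‖x‖ = 1 :=
    (hg x hx).injOn (mem_Ici.mpr (by positivity)) (mem_Ici.mpr zero_le_one)
      (by simp only [← hyx, one_smul, hgxy])
  rw [hyx, hs, one_smul]

lemma exists_pos_smul_eq [AddCommGroup E] [Module ℝ E] [TopologicalSpace E]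
    [ContinuousSMul ℝ E] (hg : Continuous g) {x : E}
    (htop : Tendsto (fun s : ℝ => g (s • x)) atTop atTop) {c : ℝ} (hc : g 0 < c) :
    ∃ s : ℝ, 0 < s ∧ g (s • x) = c := by
  obtain ⟨s, hs, hsc⟩ := intermediate_value_Ici (a := 0) (by fun_prop) htop
    (show c ∈ Ici (g ((0 : ℝ) • x)) by simpa using hc.le)
  refine ⟨s, lt_of_le_of_ne hs ?_, hsc⟩
  rintro rfl
  simp only [zero_smul] at hsc
  exact hc.ne hsc

end Radial

namespace Grassmannian42

local notation "ℝ⁶" => EuclideanSpace ℝ (Fin 6)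

noncomputable def hopfRadius (x : ℝ⁶) : ℝ := √(x 3 ^ 2 + x 4 ^ 2 + x 5 ^ 2)

/-- On `orbitCoords w` of a Plücker vector `w` the three roots are `|w₀|² + |w₅|²`,
`|w₂|² + |w₃|²` and `|w₁|² + |w₄|²` (`coordNormSq_orbitCoords`). -/
noncomputable def coordNormSq (x : ℝ⁶) : ℝ :=
  √(x 0 ^ 2 + 2 * (hopfRadius x + x 3)) + √(x 1 ^ 2 + 2 * (hopfRadius x - x 3)) +
    √(x 2 ^ 2 + 4 * (hopfRadius x + x 4))

lemma abs_le_hopfRadius (x : ℝ⁶) : |x 3| ≤ hopfRadius x ∧ |x 4| ≤ hopfRadius x :=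
  ⟨Real.abs_le_sqrt (by nlinarith [sq_nonneg (x 4), sq_nonneg (x 5)]),
    Real.abs_le_sqrt (by nlinarith [sq_nonneg (x 3), sq_nonneg (x 5)])⟩

lemma hopfRadius_smul (x : ℝ⁶) {s : ℝ} (hs : 0 ≤ s) : hopfRadius (s • x) = s * hopfRadius x := by
  simp only [hopfRadius, PiLp.smul_apply, smul_eq_mul]
  rw [show (s * x 3) ^ 2 + (s * x 4) ^ 2 + (s * x 5) ^ 2 = s ^ 2 * (x 3 ^ 2 + x 4 ^ 2 + x 5 ^ 2)
    by ring, Real.sqrt_mul (sq_nonneg s), Real.sqrt_sq hs]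

lemma continuous_coordNormSq : Continuous coordNormSq := by
  unfold coordNormSq hopfRadius
  fun_prop

lemma coordNormSq_zero : coordNormSq 0 = 0 := by
  simp [coordNormSq, hopfRadius]

lemma coordNormSq_smul (x : ℝ⁶) {s : ℝ} (hs : 0 ≤ s) :
    coordNormSq (s • x) = √((s * x 0) ^ 2 + s * (2 * (hopfRadius x + x 3))) +
      √((s * x 1) ^ 2 + s * (2 * (hopfRadius x - x 3))) +
      √((s * x 2) ^ 2 + s * (4 * (hopfRadius x + x 4))) := by
  simp only [coordNormSq, hopfRadius_smul x hs, PiLp.smul_apply, smul_eq_mul]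
  ring_nf

lemma sqrt_mul_sqrt_sq_add_mul_le {a c s t : ℝ} (hs : 0 ≤ s) (hst : s ≤ t) :
    √t * √((s * a) ^ 2 + s * c) ≤ √s * √((t * a) ^ 2 + t * c) := by
  rw [← Real.sqrt_mul (hs.trans hst), ← Real.sqrt_mul hs]
  refine Real.sqrt_le_sqrt ?_
  nlinarith [mul_nonneg (mul_nonneg (mul_nonneg hs (hs.trans hst)) (sq_nonneg a))
    (sub_nonneg.mpr hst)]

/-- That is, `s ↦ coordNormSq (s • x) / √s` is monotone on `(0, ∞)`. -/
lemma sqrt_mul_coordNormSq_smul_le (x : ℝ⁶) {s t : ℝ} (hs : 0 ≤ s) (hst : s ≤ t) :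
    √t * coordNormSq (s • x) ≤ √s * coordNormSq (t • x) := by
  rw [coordNormSq_smul x hs, coordNormSq_smul x (hs.trans hst)]
  have key := fun a c => sqrt_mul_sqrt_sq_add_mul_le (a := a) (c := c) hs hst
  linear_combination key (x 0) (2 * (hopfRadius x + x 3)) + key (x 1) (2 * (hopfRadius x - x 3)) +
    key (x 2) (4 * (hopfRadius x + x 4))

lemma coordNormSq_pos {x : ℝ⁶} (hx : x ≠ 0) : 0 < coordNormSq x := by
  obtain ⟨h3, h4⟩ := abs_le_hopfRadius x
  rw [abs_le] at h3 h4
  refine (by unfold coordNormSq; positivity : 0 ≤ coordNormSq x).lt_of_ne fun h => hx ?_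
  rw [eq_comm, coordNormSq, add_eq_zero_iff_of_nonneg (by positivity) (Real.sqrt_nonneg _),
    add_eq_zero_iff_of_nonneg (Real.sqrt_nonneg _) (Real.sqrt_nonneg _), Real.sqrt_eq_zero',
    Real.sqrt_eq_zero', Real.sqrt_eq_zero'] at h
  obtain ⟨⟨h0, h1⟩, h2⟩ := h
  have hr : hopfRadius x = 0 :=
    le_antisymm (by nlinarith [sq_nonneg (x 0), sq_nonneg (x 1)]) (Real.sqrt_nonneg _)
  rw [hopfRadius, Real.sqrt_eq_zero'] at hr
  ext i
  fin_cases i <;> simp <;>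
    nlinarith [sq_nonneg (x 0), sq_nonneg (x 1), sq_nonneg (x 2), sq_nonneg (x 3),
      sq_nonneg (x 4), sq_nonneg (x 5)]

lemma strictMonoOn_coordNormSq_smul {x : ℝ⁶} (hx : x ≠ 0) :
    StrictMonoOn (fun s : ℝ => coordNormSq (s • x)) (Ici 0) := by
  intro s hs t _ hst
  have ht0 : 0 < t := lt_of_le_of_lt hs hst
  have hle := sqrt_mul_coordNormSq_smul_le x hs hst.le
  have hpos := coordNormSq_pos (smul_ne_zero ht0.ne' hx)
  have hsqrt : √s < √t := Real.sqrt_lt_sqrt hs hst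
  exact lt_of_mul_lt_mul_left (hle.trans_lt (mul_lt_mul_of_pos_right hsqrt hpos))
    (Real.sqrt_nonneg t)

lemma tendsto_coordNormSq_smul_atTop {x : ℝ⁶} (hx : x ≠ 0) :
    Tendsto (fun s : ℝ => coordNormSq (s • x)) atTop atTop := by
  refine tendsto_atTop_mono' atTop ?_ (Real.tendsto_sqrt_atTop.atTop_mul_const (coordNormSq_pos hx))
  filter_upwards [eventually_ge_atTop 1] with s hs
  simpa using sqrt_mul_coordNormSq_smul_le x zero_le_one hs

def IsPlucker (w : Fin 6 → ℂ) : Prop := w 0 * w 5 + w 2 * w 3 = w 1 * w 4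

lemma IsPlucker.smul {w : Fin 6 → ℂ} (hw : IsPlucker w) (c : ℂ) : IsPlucker (c • w) := by
  unfold IsPlucker at hw ⊢
  simp only [Pi.smul_apply, smul_eq_mul]
  linear_combination c ^ 2 * hw

noncomputable def orbitCoords (w : Fin 6 → ℂ) : ℝ⁶ :=
  !₂[normSq (w 0) - normSq (w 5), normSq (w 2) - normSq (w 3), normSq (w 1) - normSq (w 4),
    normSq (w 0 * w 5) - normSq (w 2 * w 3), 2 * (w 0 * w 5 * conj (w 2 * w 3)).re,
    2 * (w 0 * w 5 * conj (w 2 * w 3)).im]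

lemma sqrt_normSq_sub_sq_add_eq {u v : ℂ} {c : ℝ} (hc : c = 4 * normSq (u * v)) :
    √((normSq u - normSq v) ^ 2 + c) = normSq u + normSq v := by
  rw [hc, normSq_mul, ← Real.sqrt_sq (add_nonneg (normSq_nonneg u) (normSq_nonneg v))]
  ring_nf

lemma hopfRadius_orbitCoords (w : Fin 6 → ℂ) :
    hopfRadius (orbitCoords w) = normSq (w 0 * w 5) + normSq (w 2 * w 3) := by
  have h := normSq_apply (w 0 * w 5 * conj (w 2 * w 3))
  rw [normSq_mul, normSq_conj, ← normSq_mul] at h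
  rw [hopfRadius, ← sqrt_normSq_sub_sq_add_eq rfl]
  simp only [orbitCoords, Matrix.cons_val]
  congr 1
  linear_combination -4 * h

lemma coordNormSq_orbitCoords {w : Fin 6 → ℂ} (hw : IsPlucker w) :
    coordNormSq (orbitCoords w) = ‖WithLp.toLp 2 w‖ ^ 2 := by
  have h14 := normSq_add (w 0 * w 5) (w 2 * w 3)
  rw [hw] at h14
  rw [coordNormSq, hopfRadius_orbitCoords, EuclideanSpace.norm_sq_eq, Fin.sum_univ_six]
  simp only [orbitCoords, Matrix.cons_val, PiLp.toLp_apply, ← normSq_eq_norm_sq]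
  rw [sqrt_normSq_sub_sq_add_eq (by ring), sqrt_normSq_sub_sq_add_eq (by ring),
    sqrt_normSq_sub_sq_add_eq (by rw [h14])]
  ring

lemma orbitCoords_torusCoef_mul {t : Fin 4 → ℂ} (ht : ∀ i, ‖t i‖ = 1) (w : Fin 6 → ℂ) :
    orbitCoords (fun k => torusCoef t k * w k) = orbitCoords w := by
  have hnt : ∀ i, normSq (t i) = 1 := fun i => by rw [normSq_eq_norm_sq, ht i, one_pow]
  set δ := t 0 * t 1 * t 2 * t 3
  have hδ : ‖δ‖ = 1 := by simp [δ, ht]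
  have hnδ : normSq δ = 1 := by rw [normSq_eq_norm_sq, hδ, one_pow]
  have hD₁ : torusCoef t 0 * w 0 * (torusCoef t 5 * w 5) = δ * (w 0 * w 5) := by
    simp only [torusCoef, Matrix.cons_val]; ring
  have hD₂ : torusCoef t 2 * w 2 * (torusCoef t 3 * w 3) = δ * (w 2 * w 3) := by
    simp only [torusCoef, Matrix.cons_val]; ring
  have hD : ∀ z₁ z₂ : ℂ, δ * z₁ * conj (δ * z₂) = z₁ * conj z₂ := fun z₁ z₂ => by
    rw [map_mul]
    linear_combination z₁ * conj z₂ * mul_conj_eq_one_of_norm_eq_one hδ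
  simp only [orbitCoords, hD₁, hD₂, hD, normSq_mul, hnδ, one_mul]
  simp only [torusCoef, Matrix.cons_val, normSq_mul, hnt, one_mul]

lemma orbitCoords_smul_of_norm_eq_one {ζ : ℂ} (hζ : ‖ζ‖ = 1) (w : Fin 6 → ℂ) :
    orbitCoords (ζ • w) = orbitCoords w := by
  obtain ⟨s, hs, rfl⟩ := exists_sq_eq_of_norm_eq_one hζ
  have hcoef : ∀ k, torusCoef (fun _ => s) k = s ^ 2 := by
    intro k
    fin_cases k <;> simp [torusCoef, sq]
  simpa only [hcoef, ← smul_eq_mul, ← Pi.smul_def] using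
    orbitCoords_torusCoef_mul (t := fun _ => s) (fun _ => hs) w

lemma exists_torusCoef_eq {l a b c : ℂ} (hl : ‖l‖ = 1) (ha : ‖a‖ = 1) (hb : ‖b‖ = 1)
    (hc : ‖c‖ = 1) : ∃ t : Fin 4 → ℂ, (∀ i, ‖t i‖ = 1) ∧
      torusCoef t = ![a, b, c, conj c * l, conj b * l, conj a * l] := by
  obtain ⟨s, hs, hs2⟩ := exists_sq_eq_of_norm_eq_one (u := a * b * c * conj l) (by simp [*])
  have hs2' : conj s ^ 2 = conj a * conj b * conj c * l := by rw [← map_pow, hs2]; simp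
  have hs' := mul_conj_eq_one_of_norm_eq_one hs
  have ha' := mul_conj_eq_one_of_norm_eq_one ha
  have hb' := mul_conj_eq_one_of_norm_eq_one hb
  have hc' := mul_conj_eq_one_of_norm_eq_one hc
  refine ⟨![s, a * conj s, b * conj s, c * conj s], fun i => ?_, ?_⟩
  · fin_cases i <;> simp [*]
  · ext k
    fin_cases k <;>
      simp only [torusCoef, Fin.zero_eta, Fin.mk_one, Fin.reduceFinMk, Matrix.cons_val]
    · linear_combination a * hs'
    · linear_combination b * hs'
    · linear_combination c * hs'
    · linear_combination a * b * hs2' + b * conj b * conj c * l * ha' + conj c * l * hb'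
    · linear_combination a * c * hs2' + c * conj c * conj b * l * ha' + conj b * l * hc'
    · linear_combination b * c * hs2' + c * conj c * conj a * l * hb' + conj a * l * hc'

lemma exists_isPlucker_orbitCoords_eq (y : ℝ⁶) : ∃ w, IsPlucker w ∧ orbitCoords w = y := by
  obtain ⟨D₁, D₂', hD, hD₁₂⟩ := exists_normSq_sub_eq_mul_eq (y 3) ⟨y 4 / 2, y 5 / 2⟩
  obtain ⟨u₀, u₅, h₀₅, hD₁⟩ := exists_normSq_sub_eq_mul_eq (y 0) D₁
  obtain ⟨u₂, u₃, h₂₃, hD₂⟩ := exists_normSq_sub_eq_mul_eq (y 1) (conj D₂')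
  obtain ⟨u₁, u₄, h₁₄, hD₁D₂⟩ := exists_normSq_sub_eq_mul_eq (y 2) (D₁ + conj D₂')
  refine ⟨![u₀, u₁, u₂, u₃, u₄, u₅], ?_, ?_⟩
  · change u₀ * u₅ + u₂ * u₃ = u₁ * u₄
    rw [hD₁, hD₂, hD₁D₂]
  · ext i
    fin_cases i <;>
      simp [orbitCoords, hD₁, hD₂, h₀₅, h₂₃, h₁₄, hD₁₂, hD] <;> ring

lemma exists_torusCoef_mul_eq_of_orbitCoords_eq {w w' : Fin 6 → ℂ} (hw : IsPlucker w)
    (hw' : IsPlucker w') (h : orbitCoords w = orbitCoords w') :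
    ∃ t : Fin 4 → ℂ, (∀ i, ‖t i‖ = 1) ∧ ∀ k, w' k = torusCoef t k * w k := by
  simp only [orbitCoords, (WithLp.toLp_injective 2).eq_iff, Matrix.vecCons_inj] at h
  obtain ⟨h₀, h₁, h₂, h₃, h₄, h₅, -⟩ := h
  -- The Hopf coordinates fix `(w₀w₅, w₂w₃)` up to a common phase `l`, and then so does the
  -- Plücker relation for `w₁w₄`; each complementary pair is then fixed up to `(τ, conj τ * l)`.
  obtain ⟨l, hl, hD₁, hD₂⟩ := exists_norm_eq_one_of_normSq_sub_eq_of_mul_eq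
    (u := w 0 * w 5) (v := conj (w 2 * w 3)) (u' := w' 0 * w' 5) (v' := conj (w' 2 * w' 3))
    (by simpa only [normSq_conj] using h₃) (Complex.ext (by linarith) (by linarith))
  have hD₂' : w' 2 * w' 3 = l * (w 2 * w 3) := by
    simpa using congrArg conj hD₂
  have hnl : normSq l = 1 := by rw [normSq_eq_norm_sq, hl, one_pow]
  have pair : ∀ {u v u' v' : ℂ}, normSq u - normSq v = normSq u' - normSq v' →
      u' * v' = l * (u * v) → ∃ τ : ℂ, ‖τ‖ = 1 ∧ u' = τ * u ∧ v' = conj τ * l * v := by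
    intro u v u' v' hsub hmul
    obtain ⟨τ, hτ, hu, hv⟩ := exists_norm_eq_one_of_normSq_sub_eq_of_mul_eq (u := u) (v := l * v)
      (u' := u') (v' := v') (by rwa [normSq_mul, hnl, one_mul]) (by rw [hmul]; ring)
    exact ⟨τ, hτ, hu, by rw [hv, mul_assoc]⟩
  obtain ⟨τ₀, hτ₀, h0, h5⟩ := pair h₀ hD₁
  obtain ⟨τ₂, hτ₂, h2, h3⟩ := pair h₁ hD₂'
  obtain ⟨τ₁, hτ₁, h1, h4⟩ := pair h₂ (by rw [← hw, ← hw', hD₁, hD₂']; ring)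
  obtain ⟨t, ht, htτ⟩ := exists_torusCoef_eq hl hτ₀ hτ₁ hτ₂
  refine ⟨t, ht, fun k => ?_⟩
  rw [htτ]
  fin_cases k <;> simp [h0, h1, h2, h3, h4, h5]

noncomputable def unitRep (w : Fin 6 → ℂ) : Fin 6 → ℂ := ((‖WithLp.toLp 2 w‖⁻¹ : ℝ) : ℂ) • w

lemma norm_unitRep {w : Fin 6 → ℂ} (hw : w ≠ 0) : ‖WithLp.toLp 2 (unitRep w)‖ = 1 := by
  have : WithLp.toLp 2 w ≠ 0 := by simpa using hw
  rw [unitRep, WithLp.toLp_smul, norm_smul, norm_real, norm_inv, norm_norm,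
    inv_mul_cancel₀ (norm_ne_zero_iff.mpr this)]

lemma unitRep_of_norm_eq_one {w : Fin 6 → ℂ} (hw : ‖WithLp.toLp 2 w‖ = 1) : unitRep w = w := by
  rw [unitRep, hw, inv_one, ofReal_one, one_smul]

lemma unitRep_smul (c : ℂ) (w : Fin 6 → ℂ) : unitRep (c • w) = (c / ‖c‖) • unitRep w := by
  rw [unitRep, unitRep, WithLp.toLp_smul, norm_smul, smul_smul, smul_smul, mul_inv, ofReal_mul,
    ofReal_inv, ofReal_inv, div_eq_mul_inv]
  congr 1
  ring

lemma unitRep_torusCoef_mul {t : Fin 4 → ℂ} (ht : ∀ i, ‖t i‖ = 1) (w : Fin 6 → ℂ) :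
    unitRep (fun k => torusCoef t k * w k) = fun k => torusCoef t k * unitRep w k := by
  have hcoef : ∀ k, ‖torusCoef t k‖ = 1 := by
    intro k
    fin_cases k <;> simp [torusCoef, ht]
  have hnorm : ‖WithLp.toLp 2 (fun k => torusCoef t k * w k)‖ = ‖WithLp.toLp 2 w‖ := by
    simp [EuclideanSpace.norm_eq, hcoef]
  ext k
  simp only [unitRep, hnorm, Pi.smul_apply, smul_eq_mul]
  ring

lemma continuous_orbitCoords : Continuous orbitCoords := by
  unfold orbitCoords
  fun_prop

lemma continuous_unitRep : Continuous fun w : {w : Fin 6 → ℂ // w ≠ 0} => unitRep w.1 := by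
  unfold unitRep
  fun_prop (disch := simp)

lemma unitRep_ne_zero {w : Fin 6 → ℂ} (hw : w ≠ 0) : unitRep w ≠ 0 := by
  intro h
  simpa [h] using norm_unitRep hw

lemma mk_unitRep (w : {w : Fin 6 → ℂ // w ≠ 0}) :
    Quot.mk projRel ⟨unitRep w.1, unitRep_ne_zero w.2⟩ = Quot.mk projRel w := by
  have hw : ‖WithLp.toLp 2 w.1‖ ≠ 0 := by simpa using w.2
  refine Quot.sound ⟨‖WithLp.toLp 2 w.1‖, ofReal_ne_zero.mpr hw, ?_⟩
  ext k
  simp only [unitRep, Pi.smul_apply, smul_eq_mul, ← mul_assoc, ← ofReal_mul]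
  rw [mul_inv_cancel₀ hw, ofReal_one, one_mul]

lemma exists_unitRep_of_mem_pluckerQuadric {p : CP5} (hp : p ∈ pluckerQuadric) :
    ∃ w : {w : Fin 6 → ℂ // w ≠ 0}, Quot.mk projRel w = p ∧ IsPlucker w.1 ∧
      ‖WithLp.toLp 2 w.1‖ = 1 := by
  obtain ⟨w, rfl, hw⟩ := hp
  exact ⟨_, mk_unitRep w, IsPlucker.smul hw _, norm_unitRep w.2⟩

noncomputable def projOrbitCoords : CP5 → ℝ⁶ :=
  Quot.lift (fun w => orbitCoords (unitRep w.1)) <| by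
    rintro w w' ⟨c, hc, hw'⟩
    rw [← hw']
    change orbitCoords (unitRep w.1) = orbitCoords (unitRep (c • w.1))
    rw [unitRep_smul, orbitCoords_smul_of_norm_eq_one]
    simp [hc]

lemma projOrbitCoords_mk_of_norm_eq_one {w : {w : Fin 6 → ℂ // w ≠ 0}}
    (hw : ‖WithLp.toLp 2 w.1‖ = 1) : projOrbitCoords (Quot.mk projRel w) = orbitCoords w.1 := by
  change orbitCoords (unitRep w.1) = _
  rw [unitRep_of_norm_eq_one hw]

lemma continuous_projOrbitCoords : Continuous projOrbitCoords :=
  continuous_quot_lift _ (continuous_orbitCoords.comp continuous_unitRep)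

lemma coordNormSq_projOrbitCoords {p : CP5} (hp : p ∈ pluckerQuadric) :
    coordNormSq (projOrbitCoords p) = 1 := by
  obtain ⟨w, rfl, hw, hw1⟩ := exists_unitRep_of_mem_pluckerQuadric hp
  rw [projOrbitCoords_mk_of_norm_eq_one hw1, coordNormSq_orbitCoords hw, hw1, one_pow]

lemma projOrbitCoords_ne_zero {p : CP5} (hp : p ∈ pluckerQuadric) : projOrbitCoords p ≠ 0 := by
  intro h
  simpa [h, coordNormSq_zero] using coordNormSq_projOrbitCoords hp

lemma isCompact_pluckerQuadric : IsCompact pluckerQuadric := by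
  set K := Metric.sphere (0 : EuclideanSpace ℂ (Fin 6)) 1 ∩ {v | IsPlucker v.ofLp}
  have hK : IsCompact K := (isCompact_sphere 0 1).inter_right <|
    isClosed_eq (by fun_prop) (by fun_prop)
  have hne : ∀ v : K, v.1.ofLp ≠ 0 := fun v => by
    simpa using ne_zero_of_mem_unit_sphere ⟨v.1, v.2.1⟩
  have hrange : Set.range (fun v : K => Quot.mk projRel ⟨v.1.ofLp, hne v⟩) = pluckerQuadric := by
    ext p
    constructor
    · rintro ⟨v, rfl⟩
      exact ⟨_, rfl, v.2.2⟩
    · intro hp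
      obtain ⟨w, rfl, hw, hw1⟩ := exists_unitRep_of_mem_pluckerQuadric hp
      exact ⟨⟨WithLp.toLp 2 w.1, by simpa using hw1, hw⟩, rfl⟩
  have := isCompact_iff_compactSpace.mp hK
  rw [← hrange]
  exact isCompact_range (continuous_quot_mk.comp (by fun_prop))

lemma projOrbitCoords_eq_of_orbitRel {p q : ↥pluckerQuadric} (h : orbitRel p q) :
    projOrbitCoords p.1 = projOrbitCoords q.1 := by
  obtain ⟨t, ht, w, w', hw, hw', hrel⟩ := h
  rw [← hw, ← hw']
  change orbitCoords (unitRep w.1) = orbitCoords (unitRep w'.1)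
  rw [show w'.1 = fun k => torusCoef t k * w.1 k from funext hrel, unitRep_torusCoef_mul ht,
    orbitCoords_torusCoef_mul ht]

noncomputable def orbitSpaceToSphere : Quot orbitRel → Metric.sphere (0 : ℝ⁶) 1 :=
  Quot.lift (fun p => ⟨‖projOrbitCoords p.1‖⁻¹ • projOrbitCoords p.1,
      by simp [norm_smul, projOrbitCoords_ne_zero p.2]⟩)
    fun _ _ h => by simp only [projOrbitCoords_eq_of_orbitRel h]

lemma coe_orbitSpaceToSphere_mk (p : pluckerQuadric) :
    (orbitSpaceToSphere (Quot.mk _ p) : ℝ⁶) = ‖projOrbitCoords p.1‖⁻¹ • projOrbitCoords p.1 :=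
  rfl

lemma continuous_orbitSpaceToSphere : Continuous orbitSpaceToSphere := by
  refine continuous_quot_lift _ (Continuous.subtype_mk ?_ _)
  have hΦ : Continuous fun p : pluckerQuadric => projOrbitCoords p.1 :=
    continuous_projOrbitCoords.comp continuous_subtype_val
  exact (hΦ.norm.inv₀ fun p => norm_ne_zero_iff.mpr (projOrbitCoords_ne_zero p.2)).smul hΦ

lemma orbitSpaceToSphere_injective : Function.Injective orbitSpaceToSphere := by
  rintro ⟨⟨_, hp⟩⟩ ⟨⟨_, hq⟩⟩ h
  obtain ⟨w, rfl, hw, hw1⟩ := exists_unitRep_of_mem_pluckerQuadric hp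
  obtain ⟨w', rfl, hw', hw'1⟩ := exists_unitRep_of_mem_pluckerQuadric hq
  have hcoords : projOrbitCoords (Quot.mk _ w) = projOrbitCoords (Quot.mk _ w') :=
    eq_of_inv_norm_smul_eq (fun _ => strictMonoOn_coordNormSq_smul) (projOrbitCoords_ne_zero hp)
      (projOrbitCoords_ne_zero hq)
      (by rw [coordNormSq_projOrbitCoords hp, coordNormSq_projOrbitCoords hq])
      (congrArg Subtype.val h)
  rw [projOrbitCoords_mk_of_norm_eq_one hw1, projOrbitCoords_mk_of_norm_eq_one hw'1] at hcoords
  obtain ⟨t, ht, hrel⟩ := exists_torusCoef_mul_eq_of_orbitCoords_eq hw hw' hcoords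
  exact Quot.sound ⟨t, ht, w, w', rfl, rfl, hrel⟩

lemma orbitSpaceToSphere_surjective : Function.Surjective orbitSpaceToSphere := by
  intro u
  have hu := ne_zero_of_mem_unit_sphere u
  obtain ⟨s, hs, hsu⟩ := exists_pos_smul_eq continuous_coordNormSq
    (tendsto_coordNormSq_smul_atTop hu) (c := 1) (by rw [coordNormSq_zero]; exact one_pos)
  obtain ⟨w, hw, hwy⟩ := exists_isPlucker_orbitCoords_eq (s • u)
  have hw1 : ‖WithLp.toLp 2 w‖ = 1 := by
    rw [← pow_eq_one_iff_of_nonneg (norm_nonneg _) two_ne_zero,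
      ← coordNormSq_orbitCoords hw, hwy, hsu]
  have hw0 : w ≠ 0 := by rintro rfl; simp at hw1
  refine ⟨Quot.mk orbitRel ⟨Quot.mk projRel ⟨w, hw0⟩, ⟨w, hw0⟩, rfl, hw⟩, Subtype.ext ?_⟩
  rw [coe_orbitSpaceToSphere_mk, projOrbitCoords_mk_of_norm_eq_one (w := ⟨w, hw0⟩) hw1]
  dsimp only
  rw [hwy, norm_smul, Real.norm_of_nonneg hs.le, norm_eq_of_mem_sphere u, mul_one,
    inv_smul_smul₀ hs.ne']

end Grassmannian42

open Grassmannian42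

/-- the orbit space `G₄,₂/T⁴` is homotopy equivalent to the 5-sphere `S⁵`
(the unit sphere of `ℝ⁶`): there are continuous maps in both directions whose composites
are homotopic to the identities. -/
theorem orbitSpace_homotopyEquiv_sphere :
    Nonempty (ContinuousMap.HomotopyEquiv (Quot orbitRel)
      (Metric.sphere (0 : EuclideanSpace ℝ (Fin 6)) 1)) := by
  have : CompactSpace pluckerQuadric := isCompact_iff_compactSpace.mp isCompact_pluckerQuadric
  have : CompactSpace (Quot orbitRel) := Quot.compactSpace
  let e := Equiv.ofBijective _ ⟨orbitSpaceToSphere_injective, orbitSpaceToSphere_surjective⟩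
  exact ⟨(continuous_orbitSpaceToSphere.homeoOfEquivCompactToT2 (f := e)).toHomotopyEquiv⟩
end

section
/- Let H = {x ∈ ℝ³ : ‖x‖ < 1 and x₃ ≥ 0} be the open half–3-disk, let D = {x ∈ H : x₃ = 0} be its flat face, and let S² be the unit sphere of ℝ³. Then the quotient of H × S² by the equivalence relation (x, s) ≈ (x′, s′) ⇔ x = x′ and (s = s′ or x ∈ D), equipped with the quotient topology, is homeomorphic to the open unit ball of ℝ⁵. -/
/-!
The map `(x, s) ↦ (x₀, x₁, x₂ s)` spins the half-disk about its flat face; it sends `H × S²` onto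
the unit ball of `ℝ⁵ = ℝ² × ℝ³` and preserves norms. Norm preservation makes it proper (preimages
of compact sets stay away from the unit sphere, and `S²` is compact), hence a closed quotient map.
Its fibres are exactly the gluing classes, since `x₂ s` determines `x₂ ≥ 0`, and `s` as soon as
`x₂ ≠ 0`; so it descends to a homeomorphism from the quotient.
-/

/-- The open half–3-disk `H = {x ∈ ℝ³ : ‖x‖ < 1, x₃ ≥ 0}`. -/
def halfDisk : Set (EuclideanSpace ℝ (Fin 3)) :=
  {x | ‖x‖ < 1 ∧ 0 ≤ x 2}

/-- The flat face `D = {x ∈ H : x₃ = 0}` of the half-disk. -/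
def flatFace : Set (EuclideanSpace ℝ (Fin 3)) :=
  {x | x ∈ halfDisk ∧ x 2 = 0}

/-- The gluing relation on `H × S²`: `(x,s) ≈ (x′,s′)` iff `x = x′` and
(`s = s′` or `x ∈ D`); over each point of the flat face the whole sphere is collapsed. -/
def halfDiskGlueRel
    (p q : ↥halfDisk × ↥(Metric.sphere (0 : EuclideanSpace ℝ (Fin 3)) 1)) : Prop :=
  p.1 = q.1 ∧ (p.2 = q.2 ∨ (p.1 : EuclideanSpace ℝ (Fin 3)) ∈ flatFace)

open Metric Topology

theorem Topology.IsQuotientMap.isHomeomorph_quotLift {X Y : Type*} [TopologicalSpace X]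
    [TopologicalSpace Y] {f : X → Y} {r : X → X → Prop} (hf : IsQuotientMap f)
    (hr : ∀ x y, f x = f y ↔ r x y) :
    IsHomeomorph (Quot.lift f fun x y h ↦ (hr x y).2 h) := by
  refine isHomeomorph_iff_isQuotientMap_injective.2 ⟨?_, ?_⟩
  · exact IsQuotientMap.of_comp continuous_quot_mk (continuous_quot_lift _ hf.continuous) hf
  · rintro ⟨x⟩ ⟨y⟩ hxy
    exact Quot.sound ((hr x y).1 hxy)

theorem exists_norm_eq_one_norm_smul_eq {E : Type*} [NormedAddCommGroup E] [NormedSpace ℝ E]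
    [Nontrivial E] (v : E) : ∃ s : E, ‖s‖ = 1 ∧ ‖v‖ • s = v := by
  rcases eq_or_ne v 0 with rfl | hv
  · obtain ⟨s, hs⟩ := exists_norm_eq E zero_le_one
    exact ⟨s, hs, by simp⟩
  · refine ⟨‖v‖⁻¹ • v, norm_smul_inv_norm hv, ?_⟩
    rw [smul_smul, mul_inv_cancel₀ (norm_ne_zero_iff.2 hv), one_smul]

namespace HalfDiskGlue

local notation "ℝ³" => EuclideanSpace ℝ (Fin 3)
local notation "ℝ⁵" => EuclideanSpace ℝ (Fin 5)

def glue (a b : ℝ) (v : ℝ³) : ℝ⁵ := !₂[a, b, v 0, v 1, v 2]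

theorem norm_glue_sq (a b : ℝ) (v : ℝ³) : ‖glue a b v‖ ^ 2 = a ^ 2 + b ^ 2 + ‖v‖ ^ 2 := by
  rw [EuclideanSpace.real_norm_sq_eq, EuclideanSpace.real_norm_sq_eq, Fin.sum_univ_five,
    Fin.sum_univ_three]
  simp [glue, add_assoc]

theorem glue_inj {a b a' b' : ℝ} {v v' : ℝ³} :
    glue a b v = glue a' b' v' ↔ a = a' ∧ b = b' ∧ v = v' := by
  refine ⟨fun h ↦ ?_, by rintro ⟨rfl, rfl, rfl⟩; rfl⟩
  have h' := fun i ↦ congrArg (· i) h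
  refine ⟨by simpa [glue] using h' 0, by simpa [glue] using h' 1, ?_⟩
  ext i
  fin_cases i
  · simpa [glue] using h' 2
  · simpa [glue] using h' 3
  · simpa [glue] using h' 4

theorem glue_eta (y : ℝ⁵) : glue (y 0) (y 1) !₂[y 2, y 3, y 4] = y := by
  ext i
  fin_cases i <;> rfl

theorem continuous_glue : Continuous fun p : ℝ × ℝ × ℝ³ ↦ glue p.1 p.2.1 p.2.2 := by
  refine (PiLp.continuous_toLp 2 _).comp (continuous_pi fun i ↦ ?_)
  fin_cases i <;> simp <;> fun_prop

def spin (x s : ℝ³) : ℝ⁵ := glue (x 0) (x 1) (x 2 • s)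

theorem continuous_spin : Continuous fun p : ℝ³ × ℝ³ ↦ spin p.1 p.2 :=
  continuous_glue.comp (f := fun p : ℝ³ × ℝ³ ↦ (p.1 0, p.1 1, p.1 2 • p.2)) (by fun_prop)

theorem norm_spin {x s : ℝ³} (hs : ‖s‖ = 1) : ‖spin x s‖ = ‖x‖ := by
  refine (sq_eq_sq₀ (norm_nonneg _) (norm_nonneg _)).1 ?_
  rw [spin, norm_glue_sq, norm_smul, hs, mul_one, Real.norm_eq_abs, sq_abs,
    EuclideanSpace.real_norm_sq_eq x, Fin.sum_univ_three]

theorem spin_eq_spin_iff {x x' s s' : ℝ³} (hx : 0 ≤ x 2) (hx' : 0 ≤ x' 2) (hs : ‖s‖ = 1)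
    (hs' : ‖s'‖ = 1) : spin x s = spin x' s' ↔ x = x' ∧ (s = s' ∨ x 2 = 0) := by
  refine ⟨fun h ↦ ?_, ?_⟩
  · obtain ⟨h0, h1, h2⟩ := glue_inj.1 h
    have hx2 : x 2 = x' 2 := by
      simpa [norm_smul, hs, hs', abs_of_nonneg hx, abs_of_nonneg hx'] using congrArg norm h2
    refine ⟨?_, ?_⟩
    · ext i
      fin_cases i <;> assumption
    · rw [← hx2] at h2
      exact or_iff_not_imp_right.2 fun h0 ↦ (smul_right_inj h0).1 h2
  · rintro ⟨rfl, rfl | hx0⟩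
    · rfl
    · simp [spin, hx0]

theorem exists_spin_eq (y : ℝ⁵) : ∃ x s : ℝ³, 0 ≤ x 2 ∧ ‖s‖ = 1 ∧ spin x s = y := by
  obtain ⟨s, hs, hv⟩ := exists_norm_eq_one_norm_smul_eq (!₂[y 2, y 3, y 4] : ℝ³)
  refine ⟨!₂[y 0, y 1, ‖(!₂[y 2, y 3, y 4] : ℝ³)‖], s, norm_nonneg _, hs, ?_⟩
  show glue (y 0) (y 1) (‖(!₂[y 2, y 3, y 4] : ℝ³)‖ • s) = y
  rw [hv, glue_eta]

def spinBall (p : halfDisk × sphere (0 : ℝ³) 1) : ball (0 : ℝ⁵) 1 :=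
  ⟨spin p.1 p.2, by
    rw [mem_ball_zero_iff, norm_spin (mem_sphere_zero_iff_norm.1 p.2.2)]
    exact p.1.2.1⟩

theorem continuous_spinBall : Continuous spinBall :=
  (continuous_spin.comp (continuous_subtype_val.prodMap continuous_subtype_val)).subtype_mk _

theorem spinBall_eq_spinBall_iff (p q : halfDisk × sphere (0 : ℝ³) 1) :
    spinBall p = spinBall q ↔ halfDiskGlueRel p q := by
  rw [Subtype.ext_iff, spinBall, spinBall, spin_eq_spin_iff p.1.2.2 q.1.2.2
    (mem_sphere_zero_iff_norm.1 p.2.2) (mem_sphere_zero_iff_norm.1 q.2.2), halfDiskGlueRel,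
    flatFace, ← Subtype.ext_iff, ← Subtype.ext_iff]
  simp [p.1.2]

theorem surjective_spinBall : Function.Surjective spinBall := by
  rintro ⟨y, hy⟩
  obtain ⟨x, s, hx, hs, rfl⟩ := exists_spin_eq y
  have hx1 : ‖x‖ < 1 := by rwa [mem_ball_zero_iff, norm_spin hs] at hy
  exact ⟨(⟨x, hx1, hx⟩, ⟨s, mem_sphere_zero_iff_norm.2 hs⟩), rfl⟩

theorem isProperMap_spinBall : IsProperMap spinBall := by
  refine isProperMap_iff_isCompact_preimage.2 ⟨continuous_spinBall, fun K hK ↦ ?_⟩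
  obtain ⟨r, hr, hKr⟩ : ∃ r < 1, (↑) '' K ⊆ ball (0 : ℝ⁵) r :=
    exists_lt_subset_ball (hK.image continuous_subtype_val).isClosed
      (by rintro _ ⟨y, -, rfl⟩; exact y.2)
  have hA : IsCompact ((↑) ⁻¹' (closedBall (0 : ℝ³) r ∩ {x | 0 ≤ x 2}) : Set halfDisk) := by
    refine (IsInducing.subtypeVal.isCompact_preimage_iff fun x hx ↦ ?_).2 ?_
    · exact ⟨⟨x, (mem_closedBall_zero_iff.1 hx.1).trans_lt hr, hx.2⟩, rfl⟩
    · exact (isCompact_closedBall 0 r).inter_right (isClosed_le continuous_const (by fun_prop))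
  refine (hA.prod isCompact_univ).of_isClosed_subset
    (hK.isClosed.preimage continuous_spinBall) ?_
  rintro ⟨x, s⟩ hxs
  have hr' := mem_ball_zero_iff.1 (hKr ⟨_, hxs, rfl⟩)
  rw [spinBall, norm_spin (mem_sphere_zero_iff_norm.1 s.2)] at hr'
  exact ⟨⟨mem_closedBall_zero_iff.2 hr'.le, x.2.2⟩, trivial⟩

end HalfDiskGlue

open HalfDiskGlue in
/-- the quotient of `H × S²` collapsing the sphere factor over the flat face
is homeomorphic to the open unit ball of `ℝ⁵`. -/
theorem halfDisk_glued_sphere_homeomorph_ball :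
    Nonempty (Quot halfDiskGlueRel ≃ₜ Metric.ball (0 : EuclideanSpace ℝ (Fin 5)) 1) :=
  ⟨((isProperMap_spinBall.isClosedMap.isQuotientMap continuous_spinBall
    surjective_spinBall).isHomeomorph_quotLift spinBall_eq_spinBall_iff).homeomorph⟩
end
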